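/- Let u ∈ BMOA(𝕋), s > 0, and let f ∈ Ker(H_u² - s²I), f ≠ 0, with g = H_u f / s. Then the unimodular function φ = g/conj(f) on the unit circle is independent of the choice of f: if f₁, f₂ ∈ Ker(H_u² - s²I) with g_i = H_u f_i/s, then conj(f₁)·g₂ = conj(f₂)·g₁ a.e. on 𝕋, and |g| = |f| a.e. on 𝕋. -/

import Mathlib

open MeasureTheory Complex Real ComplexConjugate AddCircle

noncomputable section

instance fact2pi : Fact (0 < 2 * π) := ⟨by positivity⟩

abbrev Tc : Type := AddCircle (2 * π)

abbrev haarT : Measure Tc := haarAddCircle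

abbrev HL2 : Type := Lp ℂ 2 haarT

def IsHardy (f : HL2) : Prop := ∀ n : ℤ, n < 0 → fourierCoeff (⇑f) n = 0

def IsHardyFun (u : Tc → ℂ) : Prop := ∀ n : ℤ, n < 0 → fourierCoeff u n = 0

def IsInnerF (θ : Tc → ℂ) : Prop :=
  AEStronglyMeasurable θ haarT ∧ (∀ᵐ x ∂haarT, ‖θ x‖ = 1) ∧ IsHardyFun θ

def IsHankelOp (u : Tc → ℂ) (H : HL2 → HL2) : Prop :=
  MemLp u 2 haarT ∧ IsHardyFun u ∧
  (∃ C : ℝ, ∀ f, ‖H f‖ ≤ C * ‖f‖) ∧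
  (∀ f g, H (f + g) = H f + H g) ∧
  (∀ (c : ℂ) (f : HL2), H (c • f) = conj c • H f) ∧
  (∀ f, IsHardy (H f)) ∧
  (∀ f g : HL2, IsHardy g →
    Integrable (fun x => u x * conj (f x) * conj (g x)) haarT →
    (inner ℂ g (H f) : ℂ) = ∫ x, u x * conj (f x) * conj (g x) ∂haarT)

def IsShiftAdjOf (H K : HL2 → HL2) : Prop :=
  ∀ f, IsHardy (K f) ∧
    ∀ n : ℤ, 0 ≤ n → fourierCoeff (⇑(K f)) n = fourierCoeff (⇑(H f)) (n + 1)

def IsSzego (P : HL2 →L[ℂ] HL2) : Prop :=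
  (∀ f, IsHardy (P f)) ∧ ∀ f g : HL2, IsHardy g → (inner ℂ g (f - P f) : ℂ) = 0

def MemKz (θ : Tc → ℂ) (f : HL2) : Prop :=
  IsHardy f ∧ ∀ h w : HL2, IsHardy h →
    (⇑w =ᵐ[haarT] fun x => fourier 1 x * θ x * h x) → (inner ℂ w f : ℂ) = 0

def MemK (θ : Tc → ℂ) (f : HL2) : Prop :=
  IsHardy f ∧ ∀ h w : HL2, IsHardy h →
    (⇑w =ᵐ[haarT] fun x => θ x * h x) → (inner ℂ w f : ℂ) = 0

/-! For Hardy functions `f, g` the Hankel form is symmetric, `⟪g, H f⟫ = ⟪f, H g⟫` (on monomials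
both sides are `∫ u z̄ᵐ z̄ⁿ`; extend by continuity), and the Fourier coefficients of `H (zⁿ f)` are
those of `H f` shifted by `n`. Hence `conj f₁ · H f₂` and `conj f₂ · H f₁` have the same `n`-th
Fourier coefficient for `n ≥ 0`; for `n < 0` apply the same identity to `H f₂, H f₁` and use
`H² fᵢ = s² fᵢ`. An integrable function on the circle is determined by its Fourier coefficients,
because trigonometric polynomials are dense in `C(𝕋)`. Finally `H f₁ / s` is again an eigenvector,
with `H (H f₁ / s) = s f₁`; pairing it with `f₁` gives `s |f₁|² = |H f₁|² / s`. -/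

open Filter Topology
open scoped BoundedContinuousFunction NNReal InnerProductSpace

theorem ae_eq_zero_of_forall_integral_smul_eq_zero {X E : Type*} [TopologicalSpace X]
    [HasOuterApproxClosed X] [MeasurableSpace X] [BorelSpace X]
    [NormedAddCommGroup E] [NormedSpace ℝ E] [CompleteSpace E]
    {μ : Measure X} {D : X → E} (hD : Integrable D μ)
    (h : ∀ c : X →ᵇ ℝ≥0, ∫ x, c x • D x ∂μ = 0) : D =ᵐ[μ] 0 := by
  refine ae_eq_zero_of_forall_setIntegral_isClosed_eq_zero hD fun F hF => ?_
  have hlim : Tendsto (fun n => ∫ x, hF.apprSeq n x • D x ∂μ) atTop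
      (𝓝 (∫ x, F.indicator D x ∂μ)) := by
    refine tendsto_integral_of_dominated_convergence (fun x => ‖D x‖)
      (fun n => (hF.apprSeq n).continuous.measurable.coe_nnreal_real.aestronglyMeasurable.smul
        hD.1) hD.norm (fun n => ae_of_all _ fun x => ?_) (ae_of_all _ fun x => ?_)
    · rw [NNReal.smul_def, norm_smul, NNReal.norm_eq]
      exact mul_le_of_le_one_left (norm_nonneg _)
        (by exact_mod_cast HasOuterApproxClosed.apprSeq_apply_le_one hF n x)
    · have := ((continuous_apply x).tendsto _).comp (HasOuterApproxClosed.tendsto_apprSeq hF)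
      by_cases hx : x ∈ F
      · simp [hx, HasOuterApproxClosed.apprSeq_apply_eq_one hF _ hx]
      · simp only [hx, not_false_eq_true, Set.indicator_of_notMem] at this ⊢
        simpa using this.smul_const (D x)
  rw [← integral_indicator hF.measurableSet]
  exact tendsto_nhds_unique hlim (by simpa only [h] using tendsto_const_nhds)

section FourierUniqueness

variable {T : ℝ} [Fact (0 < T)] {E : Type*} [NormedAddCommGroup E] [NormedSpace ℂ E]

theorem integral_smul_eq_zero_of_fourierCoeff_eq_zero {D : AddCircle T → E}
    (hD : Integrable D haarAddCircle) (h : ∀ n, fourierCoeff D n = 0) (c : C(AddCircle T, ℂ)) :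
    ∫ x, c x • D x ∂haarAddCircle = 0 := by
  have hint (c : C(AddCircle T, ℂ)) : Integrable (fun x => c x • D x) haarAddCircle :=
    hD.bdd_smul ‖c‖ c.continuous.aestronglyMeasurable (ae_of_all _ c.norm_coe_le_norm)
  let Λ : C(AddCircle T, ℂ) →L[ℂ] E := LinearMap.mkContinuous
    { toFun := fun c => ∫ x, c x • D x ∂haarAddCircle
      map_add' := fun a b => by
        simp only [ContinuousMap.add_apply, add_smul]
        exact integral_add (hint a) (hint b)
      map_smul' := fun r a => by
        simp only [ContinuousMap.smul_apply, smul_eq_mul, mul_smul, RingHom.id_apply]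
        exact integral_smul r _ }
    (∫ x, ‖D x‖ ∂haarAddCircle) fun c => by
      refine (norm_integral_le_of_norm_le (hD.norm.const_mul ‖c‖)
        (ae_of_all _ fun x => ?_)).trans_eq (by rw [integral_const_mul, mul_comm])
      rw [norm_smul]
      exact mul_le_mul_of_nonneg_right (c.norm_coe_le_norm x) (norm_nonneg _)
  have hΛ : Λ = 0 := by
    refine ContinuousLinearMap.ext_on
      (Submodule.dense_iff_topologicalClosure_eq_top.mpr span_fourier_closure_eq_top) ?_
    rintro _ ⟨k, rfl⟩
    simpa [Λ, fourierCoeff, ← fourier_neg] using h (-k)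
  exact congrArg (· c) hΛ

theorem ae_eq_zero_of_fourierCoeff_eq_zero [CompleteSpace E] {D : AddCircle T → E}
    (hD : Integrable D haarAddCircle) (h : ∀ n, fourierCoeff D n = 0) : D =ᵐ[haarAddCircle] 0 :=
  ae_eq_zero_of_forall_integral_smul_eq_zero hD fun c => by
    convert integral_smul_eq_zero_of_fourierCoeff_eq_zero hD h
      ⟨fun x => ((c x : ℝ) : ℂ), by fun_prop⟩ using 3 with x
    simp [NNReal.smul_def, Complex.coe_smul]

theorem ae_eq_of_fourierCoeff_eq [CompleteSpace E] {D₁ D₂ : AddCircle T → E}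
    (hD₁ : Integrable D₁ haarAddCircle) (hD₂ : Integrable D₂ haarAddCircle)
    (h : fourierCoeff D₁ = fourierCoeff D₂) : D₁ =ᵐ[haarAddCircle] D₂ := by
  refine (ae_eq_zero_of_fourierCoeff_eq_zero (hD₁.sub hD₂) fun n => ?_).mono
    fun x hx => sub_eq_zero.mp hx
  simp only [fourierCoeff, Pi.sub_apply, smul_sub]
  rw [integral_sub (hD₁.fourier_smul _) (hD₂.fourier_smul _)]
  exact sub_eq_zero.mpr (congrFun h n)

end FourierUniqueness

theorem fourierCoeff_eq_inner (w : HL2) (n : ℤ) :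
    fourierCoeff (⇑w) n = ⟪(fourierLp 2 n : HL2), w⟫_ℂ := by
  rw [← fourierBasis_repr, fourierBasis.repr_apply_apply, coe_fourierBasis]

theorem inner_eq_tsum_fourierCoeff (v w : HL2) :
    ⟪v, w⟫_ℂ = ∑' n : ℤ, conj (fourierCoeff (⇑v) n) * fourierCoeff (⇑w) n := by
  simp only [fourierCoeff_eq_inner, inner_conj_symm]
  simpa only [coe_fourierBasis] using (fourierBasis.tsum_inner_mul_inner v w).symm

theorem inner_eq_integral (v w : HL2) : ⟪v, w⟫_ℂ = ∫ x, conj (v x) * w x ∂haarT := by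
  simp [L2.inner_def, mul_comm]

theorem integrable_conj_mul (v w : HL2) : Integrable (fun x => conj (v x) * w x) haarT := by
  simpa [mul_comm] using L2.integrable_inner (𝕜 := ℂ) v w

def fourierMul (n : ℤ) (w : HL2) : HL2 := (fourierLp ⊤ n : Lp ℂ ⊤ haarT) • w

theorem coeFn_fourierMul (n : ℤ) (w : HL2) :
    ⇑(fourierMul n w) =ᵐ[haarT] fun x => fourier n x * w x := by
  filter_upwards [Lp.coeFn_lpSMul (r := 2) (fourierLp ⊤ n : Lp ℂ ⊤ haarT) w, coeFn_fourierLp ⊤ n]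
    with x hx hn
  rw [fourierMul, hx, Pi.smul_apply', hn, smul_eq_mul]

theorem fourierCoeff_fourierMul (n : ℤ) (w : HL2) (m : ℤ) :
    fourierCoeff (⇑(fourierMul n w)) m = fourierCoeff (⇑w) (m - n) := by
  rw [fourierCoeff_congr_ae (coeFn_fourierMul n w)]
  simp only [fourierCoeff, smul_eq_mul, ← mul_assoc, ← fourier_add]
  rw [neg_sub, sub_eq_neg_add]

theorem inner_fourierMul_left (n : ℤ) (v w : HL2) :
    ⟪fourierMul n v, w⟫_ℂ = ⟪v, fourierMul (-n) w⟫_ℂ := by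
  rw [inner_eq_integral, inner_eq_integral]
  refine integral_congr_ae ?_
  filter_upwards [coeFn_fourierMul n v, coeFn_fourierMul (-n) w] with x hv hw
  rw [hv, hw, fourier_neg, map_mul]
  ring

theorem fourierCoeff_conj_mul (v w : HL2) (n : ℤ) :
    fourierCoeff (fun x => conj (v x) * w x) n = ⟪fourierMul n v, w⟫_ℂ := by
  rw [inner_eq_integral]
  refine integral_congr_ae ?_
  filter_upwards [coeFn_fourierMul n v] with x hx
  rw [hx, fourier_neg, map_mul, smul_eq_mul]
  ring

theorem isHardy_fourierLp {n : ℤ} (hn : 0 ≤ n) : IsHardy (fourierLp 2 n) := fun m hm => by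
  rw [fourierCoeff_eq_inner]
  exact orthonormal_fourier.2 (by omega)

theorem IsHardy.fourierMul {n : ℤ} (hn : 0 ≤ n) {w : HL2} (hw : IsHardy w) :
    IsHardy (fourierMul n w) := fun m hm => by
  rw [fourierCoeff_fourierMul]
  exact hw _ (by omega)

theorem IsHardy.mem_closure_span {f : HL2} (hf : IsHardy f) :
    f ∈ closure (Submodule.span ℂ (Set.range fun k : ℕ => (fourierLp 2 k : HL2)) : Set HL2) := by
  refine mem_closure_of_tendsto (hasSum_fourier_series_L2 f) (Eventually.of_forall fun s => ?_)
  refine Submodule.sum_mem _ fun i _ => ?_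
  rcases lt_or_ge i 0 with hi | hi
  · simp [hf i hi]
  · exact Submodule.smul_mem _ _ (Submodule.subset_span ⟨i.toNat, by simp [hi]⟩)


theorem IsHardy.eq_of_eqOn_fourierLp {σ : ℂ →+* ℂ} {M : Type*} [TopologicalSpace M]
    [T2Space M] [AddCommMonoid M] [Module ℂ M] {Φ Ψ : HL2 →SL[σ] M}
    (h : ∀ k : ℕ, Φ (fourierLp 2 k) = Ψ (fourierLp 2 k)) {f : HL2} (hf : IsHardy f) :
    Φ f = Ψ f :=
  ContinuousLinearMap.eqOn_closure_span (by rintro _ ⟨k, rfl⟩; exact h k) hf.mem_closure_span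

namespace IsHankelOp

variable {u : Tc → ℂ} {H : HL2 → HL2}

theorem isHardy_apply (hH : IsHankelOp u H) (f : HL2) : IsHardy (H f) := hH.2.2.2.2.2.1 f

theorem map_smul (hH : IsHankelOp u H) (c : ℂ) (f : HL2) : H (c • f) = conj c • H f :=
  hH.2.2.2.2.1 c f

theorem inner_apply_eq_integral (hH : IsHankelOp u H) (f : HL2) {g : HL2} (hg : IsHardy g)
    (hint : Integrable (fun x => u x * conj (f x) * conj (g x)) haarT) :
    ⟪g, H f⟫_ℂ = ∫ x, u x * conj (f x) * conj (g x) ∂haarT :=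
  hH.2.2.2.2.2.2 f g hg hint

def toCLM (hH : IsHankelOp u H) : HL2 →L⋆[ℂ] HL2 :=
  LinearMap.mkContinuousOfExistsBound ⟨⟨H, hH.2.2.2.1⟩, hH.map_smul⟩ hH.2.2.1

theorem integrable_mul_conj_mul_conj_fourier (hH : IsHankelOp u H) (f : HL2) (n : ℤ) :
    Integrable (fun x => u x * conj (f x) * conj (fourier n x)) haarT := by
  exact Integrable.mul_bdd (c := 1) (hH.1.integrable_mul (Lp.memLp f).star) (by fun_prop)
    (ae_of_all _ fun x => by simp [Circle.norm_coe])

theorem fourierCoeff_apply (hH : IsHankelOp u H) (f : HL2) {n : ℤ} (hn : 0 ≤ n) :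
    fourierCoeff (⇑(H f)) n = ∫ x, u x * conj (f x) * conj (fourier n x) ∂haarT := by
  have hfourier := coeFn_fourierLp (T := 2 * π) 2 n
  have hint : Integrable (fun x => u x * conj (f x) * conj ((fourierLp 2 n : HL2) x)) haarT :=
    (hH.integrable_mul_conj_mul_conj_fourier f n).congr
      (hfourier.mono fun x hx => by simp only [hx])
  rw [fourierCoeff_eq_inner, hH.inner_apply_eq_integral f (isHardy_fourierLp hn) hint]
  exact integral_congr_ae (hfourier.mono fun x hx => by simp only [hx])

theorem fourierCoeff_apply_fourierMul (hH : IsHankelOp u H) (f : HL2) {n m : ℤ} (hn : 0 ≤ n)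
    (hm : 0 ≤ m) : fourierCoeff (⇑(H (fourierMul n f))) m = fourierCoeff (⇑(H f)) (m + n) := by
  rw [hH.fourierCoeff_apply _ hm, hH.fourierCoeff_apply _ (by omega)]
  refine integral_congr_ae ((coeFn_fourierMul n f).mono fun x hx => ?_)
  simp only [hx, fourier_add, map_mul]
  ring

theorem inner_fourierLp_apply_fourierLp_comm (hH : IsHankelOp u H) (m n : ℕ) :
    ⟪(fourierLp 2 n : HL2), H (fourierLp 2 m)⟫_ℂ =
      ⟪(fourierLp 2 m : HL2), H (fourierLp 2 n)⟫_ℂ := by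
  rw [← fourierCoeff_eq_inner, ← fourierCoeff_eq_inner, hH.fourierCoeff_apply _ n.cast_nonneg,
    hH.fourierCoeff_apply _ m.cast_nonneg]
  refine integral_congr_ae ?_
  filter_upwards [coeFn_fourierLp (T := 2 * π) 2 m, coeFn_fourierLp (T := 2 * π) 2 n] with x hm hn
  rw [hm, hn]
  ring

theorem inner_apply_comm (hH : IsHankelOp u H) {f g : HL2} (hf : IsHardy f) (hg : IsHardy g) :
    ⟪g, H f⟫_ℂ = ⟪f, H g⟫_ℂ := by
  have on_basis (m : ℕ) : ⟪g, H (fourierLp 2 m)⟫_ℂ = ⟪(fourierLp 2 m : HL2), H g⟫_ℂ :=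
    hg.eq_of_eqOn_fourierLp (Φ := innerSLFlip ℂ (H (fourierLp 2 m)))
      (Ψ := (innerSL ℂ (fourierLp 2 m : HL2)).comp hH.toCLM)
      fun k => hH.inner_fourierLp_apply_fourierLp_comm m k
  exact hf.eq_of_eqOn_fourierLp (Φ := (innerSL ℂ g).comp hH.toCLM) (Ψ := innerSLFlip ℂ (H g))
    on_basis

theorem inner_fourierMul_apply_comm (hH : IsHankelOp u H) {p q : HL2} (hp : IsHardy p)
    (hq : IsHardy q) {n : ℤ} (hn : 0 ≤ n) :
    ⟪fourierMul n p, H q⟫_ℂ = ⟪fourierMul n q, H p⟫_ℂ := by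
  rw [hH.inner_apply_comm hq (hp.fourierMul hn), inner_eq_tsum_fourierCoeff,
    inner_eq_tsum_fourierCoeff]
  conv_rhs => rw [← (Equiv.addRight n).tsum_eq]
  refine tsum_congr fun m => ?_
  simp only [Equiv.coe_addRight, fourierCoeff_fourierMul, add_sub_cancel_right]
  rcases lt_or_ge m 0 with hm | hm
  · simp [hq m hm]
  · rw [hH.fourierCoeff_apply_fourierMul p hn hm]

theorem isHardy_of_apply_apply_eq_smul (hH : IsHankelOp u H) {c : ℂ} (hc : c ≠ 0) {f : HL2}
    (hf : H (H f) = c • f) : IsHardy f := fun m hm => by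
  have h := hH.isHardy_apply (H f) m hm
  rwa [hf, fourierCoeff_congr_ae (Lp.coeFn_smul c f), fourierCoeff.const_smul, smul_eq_zero,
    or_iff_right hc] at h

theorem inner_fourierMul_apply_comm_of_apply_apply_eq_smul (hH : IsHankelOp u H) {c : ℂ}
    (hc : c ≠ 0) {f₁ f₂ : HL2} (h₁ : H (H f₁) = c • f₁) (h₂ : H (H f₂) = c • f₂) (n : ℤ) :
    ⟪fourierMul n f₁, H f₂⟫_ℂ = ⟪fourierMul n f₂, H f₁⟫_ℂ := by
  have hf₁ := hH.isHardy_of_apply_apply_eq_smul hc h₁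
  have hf₂ := hH.isHardy_of_apply_apply_eq_smul hc h₂
  rcases le_or_gt 0 n with hn | hn
  · exact hH.inner_fourierMul_apply_comm hf₁ hf₂ hn
  have hswap : ⟪fourierMul (-n) (H f₂), f₁⟫_ℂ = ⟪fourierMul (-n) (H f₁), f₂⟫_ℂ := by
    have := hH.inner_fourierMul_apply_comm (hH.isHardy_apply f₂) (hH.isHardy_apply f₁)
      (n := -n) (by omega)
    rwa [h₁, h₂, inner_smul_right, inner_smul_right, mul_right_inj' hc] at this
  rw [inner_fourierMul_left, inner_fourierMul_left, ← inner_conj_symm, hswap, inner_conj_symm]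

theorem conj_mul_apply_ae_eq (hH : IsHankelOp u H) {c : ℂ} (hc : c ≠ 0) {f₁ f₂ : HL2}
    (h₁ : H (H f₁) = c • f₁) (h₂ : H (H f₂) = c • f₂) :
    (fun x => conj (f₁ x) * H f₂ x) =ᵐ[haarT] fun x => conj (f₂ x) * H f₁ x :=
  ae_eq_of_fourierCoeff_eq (integrable_conj_mul _ _) (integrable_conj_mul _ _) <| funext fun n => by
    rw [fourierCoeff_conj_mul, fourierCoeff_conj_mul,
      hH.inner_fourierMul_apply_comm_of_apply_apply_eq_smul hc h₁ h₂]

theorem norm_apply_ae_eq (hH : IsHankelOp u H) {s : ℝ} (hs : 0 < s) {f : HL2}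
    (hf : H (H f) = ((s : ℂ) ^ 2) • f) : ∀ᵐ x ∂haarT, ‖H f x‖ = s * ‖f x‖ := by
  have hsC : (s : ℂ) ≠ 0 := by exact_mod_cast hs.ne'
  have hg : H ((s : ℂ)⁻¹ • H f) = (s : ℂ) • f := by
    rw [hH.map_smul, map_inv₀, conj_ofReal, hf, smul_smul]
    congr 1
    field_simp
  have hgg : H (H ((s : ℂ)⁻¹ • H f)) = ((s : ℂ) ^ 2) • ((s : ℂ)⁻¹ • H f) := by
    rw [hg, hH.map_smul, conj_ofReal, smul_smul]
    congr 1
    field_simp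
  filter_upwards [hH.conj_mul_apply_ae_eq (pow_ne_zero 2 hsC) hf hgg, Lp.coeFn_smul (s : ℂ) f,
    Lp.coeFn_smul (s : ℂ)⁻¹ (H f)] with x hx hsf hsHf
  rw [hg, hsf, hsHf] at hx
  simp only [Pi.smul_apply, smul_eq_mul, map_mul, map_inv₀, conj_ofReal] at hx
  rw [mul_left_comm, conj_mul', mul_assoc, conj_mul'] at hx
  have hsq : s * ‖f x‖ ^ 2 = s⁻¹ * ‖H f x‖ ^ 2 := by exact_mod_cast hx
  have hsq' : ‖H f x‖ ^ 2 = (s * ‖f x‖) ^ 2 := by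
    field_simp at hsq
    linear_combination -hsq
  exact (sq_eq_sq₀ (norm_nonneg _) (by positivity)).mp hsq'

end IsHankelOp

theorem AAK_unimodular_symbol_general
    (u : Tc → ℂ) (H : HL2 → HL2) (hH : IsHankelOp u H)
    (s : ℝ) (hs : 0 < s)
    (f₁ f₂ : HL2)
    (h₁ : H (H f₁) = ((s : ℂ) ^ 2) • f₁) (h₂ : H (H f₂) = ((s : ℂ) ^ 2) • f₂) :
    ((fun x => conj (f₁ x) * (H f₂) x) =ᵐ[haarT] fun x => conj (f₂ x) * (H f₁) x) ∧
    (∀ᵐ x ∂haarT, ‖(H f₁) x‖ = s * ‖f₁ x‖) :=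
  ⟨hH.conj_mul_apply_ae_eq (pow_ne_zero 2 (ofReal_ne_zero.mpr hs.ne')) h₁ h₂,
    hH.norm_apply_ae_eq hs h₁⟩

/-- the AAK unimodular symbol.  For `f₁, f₂ ∈ Ker(H_u² - s²I)` nonzero with
`g_i = H_u f_i / s`, one has `conj(f₁)·g₂ = conj(f₂)·g₁` a.e. on the circle (so the
unimodular function `φ = g/conj(f)` does not depend on `f`), and `|H_u f| = s|f|` a.e. -/
theorem AAK_unimodular_symbol
    (u : Tc → ℂ) (H : HL2 → HL2) (hH : IsHankelOp u H)
    (s : ℝ) (hs : 0 < s)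
    (f₁ f₂ : HL2)
    (h₁ : H (H f₁) = ((s : ℂ) ^ 2) • f₁) (h₂ : H (H f₂) = ((s : ℂ) ^ 2) • f₂)
    (hf₁ : f₁ ≠ 0) (hf₂ : f₂ ≠ 0) :
    ((fun x => conj (f₁ x) * (H f₂) x) =ᵐ[haarT] fun x => conj (f₂ x) * (H f₁) x) ∧
    (∀ᵐ x ∂haarT, ‖(H f₁) x‖ = s * ‖f₁ x‖) :=
  AAK_unimodular_symbol_general u H hH s hs f₁ f₂ h₁ h₂

end
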